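/- The Verma module M(λ) over sl₂(ℂ) is simple if and only if λ ∉ ℤ_{≥0}. -/

import Mathlib

/-!
If `λ = N ∈ ℕ`, then `e` kills `f^{N+1} v`, so the span of the `fⁿ v` with `n > N` is a proper
nonzero submodule. Otherwise `h` acts diagonally with the pairwise distinct weights `λ - 2n`, so
every nonzero submodule contains some basis vector `fᵏ v`; applying `e`, whose coefficients
`n (λ - n + 1)` never vanish, brings it down to `v`, which generates everything under `f`.
-/

open Polynomial

theorem Submodule.aeval_mem_of_forall_mem {R V : Type*} [CommSemiring R] [AddCommMonoid V]
    [Module R V] {T : Module.End R V} {W : Submodule R V} (hW : ∀ x ∈ W, T x ∈ W) (p : R[X])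
    {x : V} (hx : x ∈ W) : aeval T p x ∈ W := by
  induction p using Polynomial.induction_on with
  | C a => simpa [Module.algebraMap_end_apply] using W.smul_mem a hx
  | add p q hp hq => simpa using W.add_mem hp hq
  | monomial n a ih =>
    rw [pow_succ', ← mul_assoc, mul_comm _ X, mul_assoc, map_mul, aeval_X, Module.End.mul_apply]
    exact hW _ ih

theorem Module.Basis.exists_mem_of_forall_mem_of_ne_bot {K V ι : Type*} [Field K] [AddCommGroup V]
    [Module K V] (b : Module.Basis ι K V) {T : Module.End K V} {μ : ι → K}
    (hμ : Function.Injective μ) (hT : ∀ i, T (b i) = μ i • b i) {W : Submodule K V}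
    (hW : ∀ x ∈ W, T x ∈ W) (hW0 : W ≠ ⊥) : ∃ i, b i ∈ W := by
  classical
  obtain ⟨x, hxW, hx0⟩ := W.ne_bot_iff.1 hW0
  obtain ⟨k, hk⟩ : (b.repr x).support.Nonempty := by simpa using hx0
  -- The polynomial vanishing at the other eigenvalues occurring in `x` isolates its `b k` component.
  set p : K[X] := ∏ j ∈ (b.repr x).support.erase k, (X - C (μ j))
  have heval : ∀ i, aeval T p (b i) = p.eval (μ i) • b i := fun i =>
    Module.End.aeval_apply_of_hasEigenvector
      (Module.End.hasEigenvector_iff.2 ⟨Module.End.mem_eigenspace_iff.2 (hT i), b.ne_zero i⟩)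
  have hroot : ∀ j ∈ (b.repr x).support, j ≠ k → p.eval (μ j) = 0 := fun j hj hjk => by
    simp only [p, eval_prod, eval_sub, eval_X, eval_C]
    exact Finset.prod_eq_zero (Finset.mem_erase.2 ⟨hjk, hj⟩) (sub_self _)
  have hpk : p.eval (μ k) ≠ 0 := by
    simp only [p, eval_prod, eval_sub, eval_X, eval_C]
    exact Finset.prod_ne_zero_iff.2 fun j hj =>
      sub_ne_zero.2 (hμ.ne (Finset.ne_of_mem_erase hj).symm)
  have hpx : aeval T p x = (b.repr x k * p.eval (μ k)) • b k := by
    conv_lhs => rw [← b.linearCombination_repr x, Finsupp.linearCombination_apply, Finsupp.sum,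
      map_sum]
    rw [Finset.sum_eq_single k (fun j hj hjk => by simp [heval, hroot j hj hjk]) (by simp_all),
      map_smul, heval, smul_smul]
  have hck : b.repr x k * p.eval (μ k) ≠ 0 := mul_ne_zero (Finsupp.mem_support_iff.1 hk) hpk
  refine ⟨k, ?_⟩
  rw [← inv_smul_smul₀ hck (b k), ← hpx]
  exact W.smul_mem _ (W.aeval_mem_of_forall_mem hW p hxW)

theorem Module.Basis.eq_top_of_apply_zero_mem {K V : Type*} [Field K] [AddCommGroup V]
    [Module K V] (b : Module.Basis ℕ K V) {F : Module.End K V} (hF : ∀ n, F (b n) = b (n + 1))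
    {W : Submodule K V} (hW : ∀ x ∈ W, F x ∈ W) (h0 : b 0 ∈ W) : W = ⊤ := by
  have hmem : ∀ n, b n ∈ W := fun n => by
    induction n with
    | zero => exact h0
    | succ n ih => simpa [hF n] using hW _ ih
  rw [eq_top_iff, ← b.span_eq, Submodule.span_le]
  rintro _ ⟨n, rfl⟩
  exact hmem n

namespace Verma

variable {K V : Type*} [Field K] [AddCommGroup V] [Module K V]
  (b : Module.Basis ℕ K V) {E H F : Module.End K V} {lam : K}

theorem apply_zero_mem_of_apply_mem [CharZero K]
    (hE : ∀ n : ℕ, 1 ≤ n → E (b n) = ((n : K) * (lam - n + 1)) • b (n - 1))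
    (hlam : ∀ N : ℕ, lam ≠ N) {W : Submodule K V} (hW : ∀ x ∈ W, E x ∈ W) {k : ℕ}
    (hk : b k ∈ W) : b 0 ∈ W := by
  induction k with
  | zero => exact hk
  | succ k ih =>
    have hc : ((k + 1 : ℕ) : K) * (lam - (k + 1 : ℕ) + 1) ≠ 0 := by
      refine mul_ne_zero (Nat.cast_ne_zero.2 k.succ_ne_zero) fun h => hlam k ?_
      push_cast at h
      linear_combination h
    have hEk : E (b (k + 1)) = (((k + 1 : ℕ) : K) * (lam - (k + 1 : ℕ) + 1)) • b k :=
      hE (k + 1) (by omega)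
    apply ih
    rw [← inv_smul_smul₀ hc (b k), ← hEk]
    exact W.smul_mem _ (hW _ hk)

theorem exists_proper_submodule_of_eq_natCast
    (hE : ∀ n : ℕ, 1 ≤ n → E (b n) = ((n : K) * (lam - n + 1)) • b (n - 1))
    (hH : ∀ n : ℕ, H (b n) = (lam - 2 * n) • b n) (hF : ∀ n : ℕ, F (b n) = b (n + 1))
    {N : ℕ} (hN : lam = N) :
    ∃ W : Submodule K V, (∀ x ∈ W, E x ∈ W ∧ F x ∈ W ∧ H x ∈ W) ∧ W ≠ ⊥ ∧ W ≠ ⊤ := by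
  set W := Submodule.span K (b '' Set.Ici (N + 1))
  have hgen : ∀ m, N + 1 ≤ m → b m ∈ W := fun m hm => Submodule.subset_span ⟨m, hm, rfl⟩
  have hstable : ∀ T : Module.End K V, (∀ m, N + 1 ≤ m → T (b m) ∈ W) → ∀ x ∈ W, T x ∈ W := by
    intro T hT x hx
    refine (Submodule.map_span_le T _ W).2 ?_ ⟨x, hx, rfl⟩
    rintro _ ⟨m, hm, rfl⟩
    exact hT m hm
  refine ⟨W, fun x hx => ⟨hstable E ?_ x hx, hstable F ?_ x hx, hstable H ?_ x hx⟩, ?_, ?_⟩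
  · intro m hm
    rw [hE m (by omega)]
    rcases (show N + 1 ≤ m from hm).eq_or_lt with rfl | hlt
    · -- `e` kills `f^{N+1} v` since its coefficient `(N+1)(λ - N)` vanishes.
      simp [hN]
    · exact W.smul_mem _ (hgen _ (by omega))
  · exact fun m hm => hF m ▸ hgen _ (by omega)
  · exact fun m hm => hH m ▸ W.smul_mem _ (hgen m hm)
  · exact (Submodule.ne_bot_iff W).2 ⟨b (N + 1), hgen _ le_rfl, b.ne_zero _⟩
  · intro htop
    exact b.linearIndependent.notMem_span_image (by simp) (htop ▸ Submodule.mem_top : b 0 ∈ W)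

end Verma

theorem stmt_13_general (V : Type*) [AddCommGroup V] [Module ℂ V] (lam : ℂ)
    (b : Module.Basis ℕ ℂ V) (E H F : V →ₗ[ℂ] V)
    (hE : ∀ n : ℕ, 1 ≤ n → E (b n) = ((n : ℂ) * (lam - n + 1)) • b (n - 1))
    (hH : ∀ n : ℕ, H (b n) = (lam - 2 * n) • b n)
    (hF : ∀ n : ℕ, F (b n) = b (n + 1)) :
    (∀ W : Submodule ℂ V,
        (∀ x ∈ W, E x ∈ W ∧ F x ∈ W ∧ H x ∈ W) → W = ⊥ ∨ W = ⊤) ↔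
      ∀ N : ℕ, lam ≠ (N : ℂ) := by
  refine ⟨fun hsimple N hN => ?_, fun hlam W hW => or_iff_not_imp_left.2 fun hW0 => ?_⟩
  · obtain ⟨W, hW, hW0, hWtop⟩ := Verma.exists_proper_submodule_of_eq_natCast b hE hH hF hN
    exact (hsimple W hW).elim hW0 hWtop
  · have hweight : Function.Injective fun n : ℕ => lam - 2 * n := fun m n h => by
      simpa using h
    obtain ⟨k, hk⟩ :=
      b.exists_mem_of_forall_mem_of_ne_bot hweight hH (fun x hx => (hW x hx).2.2) hW0
    exact b.eq_top_of_apply_zero_mem hF (fun x hx => (hW x hx).2.1)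
      (Verma.apply_zero_mem_of_apply_mem b hE hlam (fun x hx => (hW x hx).1) hk)

/-- The Verma module M(lam) over sl₂(ℂ) is simple iff lam ∉ ℤ≥0. -/
theorem stmt_13 (V : Type*) [AddCommGroup V] [Module ℂ V] (lam : ℂ)
    (b : Module.Basis ℕ ℂ V) (E H F : V →ₗ[ℂ] V)
    (hE0 : E (b 0) = 0)
    (hE : ∀ n : ℕ, 1 ≤ n → E (b n) = ((n : ℂ) * (lam - n + 1)) • b (n - 1))
    (hH : ∀ n : ℕ, H (b n) = (lam - 2 * n) • b n)
    (hF : ∀ n : ℕ, F (b n) = b (n + 1)) :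
    (∀ W : Submodule ℂ V,
        (∀ x ∈ W, E x ∈ W ∧ F x ∈ W ∧ H x ∈ W) → W = ⊥ ∨ W = ⊤) ↔
      ∀ N : ℕ, lam ≠ (N : ℂ) :=
  stmt_13_general V lam b E H F hE hH hF
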